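/- arXiv:1610.03972 — 3 statements merged into one kernel-verified Lean document; each statement's English description precedes it below -/
import Mathlib

section
/- Let G be a connected graph without isolated vertices, G ≠ P_3, such that G - v is well-covered for every vertex v. Then G itself is well-covered. -/
open Finset

/-- A finset of vertices is independent: no two of its members are adjacent. -/
def IndepSet {V : Type*} (G : SimpleGraph V) (A : Finset V) : Prop :=
  ∀ u ∈ A, ∀ v ∈ A, ¬ G.Adj u v

open scoped Classical in
/-- Maximum size of an independent set contained in `s` (independence number of `G[s]`). -/
noncomputable def alphaOn {V : Type*} [Fintype V] (G : SimpleGraph V) (s : Finset V) : ℕ :=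
  ((s.powerset).filter (fun A => IndepSet G A)).sup Finset.card

/-- The independence number of `G`. -/
noncomputable def alpha {V : Type*} [Fintype V] (G : SimpleGraph V) : ℕ :=
  alphaOn G Finset.univ

/-- The induced subgraph `G[s]` is well-covered: every maximal independent subset of `s`
has maximum cardinality. -/
def WellCoveredOn {V : Type*} [Fintype V] (G : SimpleGraph V) (s : Finset V) : Prop :=
  ∀ A ⊆ s, IndepSet G A →
    (∀ B ⊆ s, IndepSet G B → A ⊆ B → A = B) → A.card = alphaOn G s

/-- `G` is well-covered. -/
def WellCovered {V : Type*} [Fintype V] (G : SimpleGraph V) : Prop :=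
  WellCoveredOn G Finset.univ

open scoped Classical in
/-- The open neighborhood `N(A)`: vertices having a neighbor in `A`. -/
noncomputable def nbhd {V : Type*} [Fintype V] (G : SimpleGraph V) (A : Finset V) : Finset V :=
  Finset.univ.filter (fun v => ∃ u ∈ A, G.Adj u v)

/-- The closed neighborhood `N[A] = A ∪ N(A)`. -/
noncomputable def closedNbhd {V : Type*} [Fintype V] [DecidableEq V] (G : SimpleGraph V) (A : Finset V) :
    Finset V :=
  A ∪ nbhd G A

/-- The induced subgraph `G[s]` is in class `W₂`: every two disjoint independent subsets of `s`
extend to two disjoint maximum independent subsets of `s`. -/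
def W2On {V : Type*} [Fintype V] (G : SimpleGraph V) (s : Finset V) : Prop :=
  ∀ A ⊆ s, ∀ B ⊆ s, IndepSet G A → IndepSet G B → Disjoint A B →
    ∃ S₁ ⊆ s, ∃ S₂ ⊆ s, IndepSet G S₁ ∧ IndepSet G S₂ ∧
      S₁.card = alphaOn G s ∧ S₂.card = alphaOn G s ∧ Disjoint S₁ S₂ ∧ A ⊆ S₁ ∧ B ⊆ S₂

/-- `G` belongs to class `W₂`. -/
def W2 {V : Type*} [Fintype V] (G : SimpleGraph V) : Prop :=
  W2On G Finset.univ

/-!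
Let `A` be a maximal independent set that is not maximum. For `v ∉ A`, both `A` and a maximum
independent set `S` avoiding `v` would be maximal in the well-covered graph `G - v`, with
different sizes; so every maximum independent set contains `Aᶜ`. Each vertex of `A` has a
neighbour, which lies outside `A`, so no maximum independent set meets `A`: the maximum
independent set is exactly `Aᶜ`. Extending `A \ {w}` (for `w ∈ A`) to a maximal independent set
of `G - w` gives a maximum independent set of `G` that meets `A` unless `A = {w}`; so `G` is a
star with centre `w` and at least two leaves. If it had three, deleting one would leave a star with two
leaves, which is not well-covered (its centre alone is a maximal independent set); hence `G` is
`P₃`.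
-/

section

variable {V : Type*} {G : SimpleGraph V}

theorem IndepSet.mono {A B : Finset V} (hB : IndepSet G B) (hAB : A ⊆ B) : IndepSet G A :=
  fun u hu v hv => hB u (hAB hu) v (hAB hv)

theorem IndepSet.insert [DecidableEq V] {A : Finset V} {v : V} (hA : IndepSet G A)
    (hv : ∀ u ∈ A, ¬ G.Adj u v) : IndepSet G (insert v A) := by
  intro x hx y hy
  rcases mem_insert.mp hx with rfl | hxA <;> rcases mem_insert.mp hy with rfl | hyA
  · exact G.loopless.irrefl _
  · exact fun hxy => hv y hyA hxy.symm
  · exact hv x hxA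
  · exact hA x hxA y hyA

theorem indepSet_singleton (w : V) : IndepSet G {w} := by
  simp [IndepSet]

theorem indepSet_pair [DecidableEq V] {y z : V} (h : ¬ G.Adj y z) : IndepSet G {y, z} := by
  have h' : ¬ G.Adj z y := fun hzy => h hzy.symm
  simp [IndepSet, h, h']

def IndepOn (G : SimpleGraph V) (s A : Finset V) : Prop :=
  A ⊆ s ∧ IndepSet G A

theorem Maximal.exists_adj_of_indepOn [DecidableEq V] {s A : Finset V} {v : V}
    (hA : Maximal (IndepOn G s) A) (hv : v ∈ s) (hvA : v ∉ A) : ∃ u ∈ A, G.Adj u v := by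
  by_contra! hno
  have hins : IndepOn G s (insert v A) :=
    ⟨insert_subset hv hA.1.1, hA.1.2.insert hno⟩
  exact hvA (hA.2 hins (subset_insert v A) (mem_insert_self v A))

section alphaOn

variable [Fintype V] {s t A S : Finset V}

open scoped Classical in
theorem card_le_alphaOn (hAs : A ⊆ s) (hA : IndepSet G A) : A.card ≤ alphaOn G s :=
  le_sup (mem_filter.mpr ⟨mem_powerset.mpr hAs, hA⟩)

open scoped Classical in
theorem alphaOn_mono (hst : s ⊆ t) : alphaOn G s ≤ alphaOn G t :=
  Finset.sup_le fun A hA => by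
    rw [mem_filter, mem_powerset] at hA
    exact card_le_alphaOn (hA.1.trans hst) hA.2

open scoped Classical in
theorem exists_indepSet_card_eq_alphaOn (G : SimpleGraph V) (s : Finset V) :
    ∃ S ⊆ s, IndepSet G S ∧ S.card = alphaOn G s := by
  obtain ⟨S, hS, hcard⟩ := exists_mem_eq_sup (s.powerset.filter (IndepSet G))
    ⟨∅, mem_filter.mpr ⟨empty_mem_powerset s, by simp [IndepSet]⟩⟩ Finset.card
  rw [mem_filter, mem_powerset] at hS
  exact ⟨S, hS.1, hS.2, by rw [alphaOn, hcard]⟩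

theorem alphaOn_eq_of_card_eq (hSs : S ⊆ s) (hst : s ⊆ t) (hS : IndepSet G S)
    (hcard : S.card = alphaOn G t) : alphaOn G s = alphaOn G t :=
  (alphaOn_mono hst).antisymm (hcard ▸ card_le_alphaOn hSs hS)

theorem maximal_indepOn_of_card_eq (hSs : S ⊆ s) (hst : s ⊆ t) (hS : IndepSet G S)
    (hcard : S.card = alphaOn G t) : Maximal (IndepOn G s) S :=
  ⟨⟨hSs, hS⟩, fun _ hB hSB =>
    (eq_of_subset_of_card_le hSB (hcard ▸ card_le_alphaOn (hB.1.trans hst) hB.2)).ge⟩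

theorem exists_maximal_indepOn_superset (hA : IndepOn G s A) :
    ∃ B, A ⊆ B ∧ Maximal (IndepOn G s) B :=
  Finite.exists_le_maximal hA

theorem wellCoveredOn_iff :
    WellCoveredOn G s ↔ ∀ A, Maximal (IndepOn G s) A → A.card = alphaOn G s :=
  ⟨fun h A hA => h A hA.1.1 hA.1.2 fun _ hBs hB hAB => hAB.antisymm (hA.2 ⟨hBs, hB⟩ hAB),
    fun h A hAs hA hmax => h A ⟨⟨hAs, hA⟩, fun B hB hAB => (hmax B hB.1 hB.2 hAB).ge⟩⟩

theorem WellCoveredOn.card_eq (h : WellCoveredOn G s) (hA : Maximal (IndepOn G s) A) :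
    A.card = alphaOn G s :=
  wellCoveredOn_iff.mp h A hA

theorem not_wellCoveredOn_of_forall_adj [DecidableEq V] {w y z : V} (hw : w ∈ s)
    (hadj : ∀ x ∈ s, x ≠ w → G.Adj w x) (hy : y ∈ s) (hz : z ∈ s) (hyz : y ≠ z)
    (hnadj : ¬ G.Adj y z) : ¬ WellCoveredOn G s := by
  intro h
  have hmax : Maximal (IndepOn G s) {w} := by
    refine ⟨⟨singleton_subset_iff.mpr hw, indepSet_singleton w⟩, fun B hB hwB x hx => ?_⟩
    by_contra hxw
    exact hB.2 w (hwB (mem_singleton_self w)) x hx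
      (hadj x (hB.1 hx) (fun h => hxw (mem_singleton.mpr h)))
  have hpair : ({y, z} : Finset V).card ≤ alphaOn G s :=
    card_le_alphaOn (insert_subset hy (singleton_subset_iff.mpr hz))
      (indepSet_pair hnadj)
  rw [card_pair hyz, ← h.card_eq hmax, card_singleton] at hpair
  omega

end alphaOn

theorem nonempty_iso_pathGraph_three {a w b : V} (haw : a ≠ w) (hbw : b ≠ w) (hab : a ≠ b)
    (hcover : ∀ x, x = a ∨ x = w ∨ x = b) (hwa : G.Adj w a) (hwb : G.Adj w b)
    (hnab : ¬ G.Adj a b) : Nonempty (G ≃g SimpleGraph.pathGraph 3) := by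
  let f : Fin 3 → V := ![a, w, b]
  have hf : Function.Bijective f := by
    refine ⟨fun i j hij => ?_, fun x => ?_⟩
    · fin_cases i <;> fin_cases j <;> simp_all [f, eq_comm]
    · rcases hcover x with rfl | rfl | rfl
      exacts [⟨0, rfl⟩, ⟨1, rfl⟩, ⟨2, rfl⟩]
  refine ⟨(⟨Equiv.ofBijective f hf, fun {i j} => ?_⟩ : SimpleGraph.pathGraph 3 ≃g G).symm⟩
  fin_cases i <;> fin_cases j <;>
    simp [f, SimpleGraph.pathGraph_adj, hwa, hwb, hwa.symm, hwb.symm, hnab, G.adj_comm b a]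

section vertexDeleted

variable [Fintype V] [DecidableEq V] {A S : Finset V}

theorem compl_subset_of_card_eq_alpha (hdel : ∀ v, WellCoveredOn G (univ.erase v))
    (hA : Maximal (IndepOn G univ) A) (hlt : A.card < alpha G)
    (hS : IndepSet G S) (hcard : S.card = alpha G) : Aᶜ ⊆ S := by
  intro v hvA
  by_contra hvS
  have hSv : S ⊆ univ.erase v := subset_erase.mpr ⟨subset_univ S, hvS⟩
  have hAv : A ⊆ univ.erase v := subset_erase.mpr ⟨subset_univ A, mem_compl.mp hvA⟩
  have hSmax := maximal_indepOn_of_card_eq hSv (erase_subset v _) hS hcard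
  have hAmax : Maximal (IndepOn G (univ.erase v)) A :=
    hA.mono (fun B hB => ⟨subset_univ B, hB.2⟩) ⟨hAv, hA.1.2⟩
  have := (hdel v).card_eq hSmax ▸ (hdel v).card_eq hAmax
  omega

theorem eq_compl_of_card_eq_alpha (hiso : ∀ v, ∃ u, G.Adj v u)
    (hdel : ∀ v, WellCoveredOn G (univ.erase v)) (hA : Maximal (IndepOn G univ) A)
    (hlt : A.card < alpha G) (hS : IndepSet G S) (hcard : S.card = alpha G) : S = Aᶜ := by
  have hAcS := compl_subset_of_card_eq_alpha hdel hA hlt hS hcard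
  refine Subset.antisymm (fun a haS => mem_compl.mpr fun haA => ?_) hAcS
  obtain ⟨u, hau⟩ := hiso a
  have huA : u ∉ A := fun huA => hA.1.2 a haA u huA hau
  exact hS a haS u (hAcS (mem_compl.mpr huA)) hau

theorem exists_eq_singleton_of_card_lt_alpha (hiso : ∀ v, ∃ u, G.Adj v u)
    (hdel : ∀ v, WellCoveredOn G (univ.erase v)) (hA : Maximal (IndepOn G univ) A)
    (hlt : A.card < alpha G) : ∃ w, A = {w} := by
  obtain ⟨S, -, hS, hcard⟩ := exists_indepSet_card_eq_alphaOn G univ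
  obtain rfl := eq_compl_of_card_eq_alpha hiso hdel hA hlt hS hcard
  have hAne : A.Nonempty := by
    obtain ⟨v, hv⟩ : Aᶜ.Nonempty := card_pos.mp (by rw [hcard]; exact pos_of_gt hlt)
    obtain ⟨u, hu, -⟩ := hA.exists_adj_of_indepOn (mem_univ v) (mem_compl.mp hv)
    exact ⟨u, hu⟩
  refine card_eq_one.mp (le_antisymm (card_le_one.mpr fun w hw a ha => ?_) hAne.card_pos)
  by_contra hwa
  have hAerase : IndepOn G (univ.erase w) (A.erase w) :=
    ⟨erase_subset_erase w (subset_univ A), hA.1.2.mono (erase_subset w A)⟩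
  obtain ⟨B, hAB, hB⟩ := exists_maximal_indepOn_superset hAerase
  -- `Aᶜ` is a maximum independent set of `G` avoiding `w`, so deleting `w` does not lower `α`.
  have halpha : alphaOn G (univ.erase w) = alpha G :=
    alphaOn_eq_of_card_eq (subset_erase.mpr ⟨subset_univ _, fun hwc => mem_compl.mp hwc hw⟩)
      (erase_subset w univ) hS hcard
  have hBA := eq_compl_of_card_eq_alpha hiso hdel hA hlt hB.1.2 ((hdel w).card_eq hB ▸ halpha)
  exact mem_compl.mp (hBA ▸ hAB (mem_erase.mpr ⟨Ne.symm hwa, ha⟩)) ha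

theorem nonempty_iso_pathGraph_three_of_star {w : V}
    (hdel : ∀ v, WellCoveredOn G (univ.erase v)) (hadj : ∀ x, x ≠ w → G.Adj w x)
    (hleaves : IndepSet G {w}ᶜ) (htwo : 2 ≤ ({w}ᶜ : Finset V).card) :
    Nonempty (G ≃g SimpleGraph.pathGraph 3) := by
  have hne : ∀ {x}, x ∈ ({w}ᶜ : Finset V) → x ≠ w := fun hx => by simpa using hx
  rcases htwo.eq_or_lt with htwo | hthree
  · obtain ⟨a, b, hab, hwab⟩ := card_eq_two.mp htwo.symm
    have ha : a ∈ ({w}ᶜ : Finset V) := hwab ▸ mem_insert_self a {b}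
    have hb : b ∈ ({w}ᶜ : Finset V) := hwab ▸ mem_insert_of_mem (mem_singleton_self b)
    refine nonempty_iso_pathGraph_three (hne ha) (hne hb) hab (fun x => ?_) (hadj a (hne ha))
      (hadj b (hne hb)) (hleaves a ha b hb)
    by_cases hxw : x = w
    · exact Or.inr (Or.inl hxw)
    · have hx : x ∈ ({a, b} : Finset V) := hwab ▸ mem_compl.mpr (mt mem_singleton.mp hxw)
      simp only [mem_insert, mem_singleton] at hx
      tauto
  · obtain ⟨v, hv, y, hy, z, hz, hvy, hvz, hyz⟩ := two_lt_card.mp hthree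
    exact (not_wellCoveredOn_of_forall_adj (mem_erase.mpr ⟨Ne.symm (hne hv), mem_univ w⟩)
      (fun x _ hxw => hadj x hxw) (mem_erase.mpr ⟨hvy.symm, mem_univ y⟩)
      (mem_erase.mpr ⟨hvz.symm, mem_univ z⟩) hyz (hleaves y hy z hz) (hdel v)).elim

end vertexDeleted

end

theorem stmt2_general {V : Type*} [Fintype V] [DecidableEq V] (G : SimpleGraph V)
    (hiso : ∀ v : V, ∃ u, G.Adj v u)
    (hP3 : ¬ Nonempty (G ≃g SimpleGraph.pathGraph 3))
    (h : ∀ v : V, WellCoveredOn G (Finset.univ.erase v)) :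
    WellCovered G := by
  rw [WellCovered, wellCoveredOn_iff]
  intro A hA
  by_contra hne
  have hlt : A.card < alpha G := (card_le_alphaOn hA.1.1 hA.1.2).lt_of_ne hne
  obtain ⟨w, rfl⟩ := exists_eq_singleton_of_card_lt_alpha hiso h hA hlt
  obtain ⟨S, -, hS, hcard⟩ := exists_indepSet_card_eq_alphaOn G univ
  obtain rfl := eq_compl_of_card_eq_alpha hiso h hA hlt hS hcard
  refine hP3 (nonempty_iso_pathGraph_three_of_star h (fun x hxw => ?_) hS ?_)
  · obtain ⟨u, hu, hux⟩ := hA.exists_adj_of_indepOn (mem_univ x) (mt mem_singleton.mp hxw)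
    rwa [mem_singleton.mp hu] at hux
  · rw [card_singleton] at hlt
    exact hcard ▸ hlt

/-- A connected graph without isolated vertices, not isomorphic to P₃, such that G - v
is well-covered for every v, is itself well-covered. -/
theorem stmt2 {V : Type*} [Fintype V] [DecidableEq V] (G : SimpleGraph V)
    (hconn : G.Connected) (hiso : ∀ v : V, ∃ u, G.Adj v u)
    (hP3 : ¬ Nonempty (G ≃g SimpleGraph.pathGraph 3))
    (h : ∀ v : V, WellCoveredOn G (Finset.univ.erase v)) :
    WellCovered G :=
  stmt2_general G hiso hP3 h
end

section
/- If G is a connected graph in class W_2 with G ≠ K_2, then for every pair of vertices u, v of G there exists a maximum independent set S of G with S ∩ {u, v} = ∅. -/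
open Finset

/-! If `u` and `v` are not adjacent, `W₂` extends the independent sets `{u, v}` and `∅` to disjoint
maximum independent sets, and the second one avoids `u` and `v`. If they are adjacent, then
(as `G` is connected and not `K₂`) one of them, say `u`, has a neighbour `w ≠ v`; extending `{v}`
and `{w}` gives a maximum independent set containing `w`, hence avoiding both `v` and `u`. -/

section

variable {V : Type*} {G : SimpleGraph V}

lemma IndepSet.empty : IndepSet G ∅ := by
  simp [IndepSet]

lemma IndepSet.singleton (a : V) : IndepSet G {a} := by
  simp [IndepSet]

lemma IndepSet.pair [DecidableEq V] {u v : V} (huv : ¬ G.Adj u v) : IndepSet G {u, v} := by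
  simp only [IndepSet, Finset.mem_insert, Finset.mem_singleton]
  rintro x (rfl | rfl) y (rfl | rfl) <;> simp_all [SimpleGraph.adj_comm]

lemma SimpleGraph.Reachable.mem_of_adj_closed {s : Set V}
    (hs : ∀ x y, G.Adj x y → x ∈ s → y ∈ s) {a b : V} (hab : G.Reachable a b) (ha : a ∈ s) :
    b ∈ s := by
  rw [SimpleGraph.reachable_iff_reflTransGen] at hab
  induction hab with
  | refl => exact ha
  | tail _ hadj ih => exact hs _ _ hadj ih

lemma nonempty_iso_top_fin_two {u v : V} (huv : G.Adj u v)
    (hall : ∀ x, x = u ∨ x = v) : Nonempty (G ≃g (⊤ : SimpleGraph (Fin 2))) := by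
  classical
  have hV : ∀ x, x ∈ ({u, v} : Finset V) := by simpa using hall
  let _ : Fintype V := Fintype.ofList [u, v] (by simpa using hall)
  have hG : G = ⊤ := by
    ext a b
    rcases hall a with rfl | rfl <;> rcases hall b with rfl | rfl <;>
      simp [huv, huv.symm, huv.ne, huv.ne.symm]
  have hcard : Fintype.card V = 2 := by
    rw [← Finset.card_univ, ← Finset.eq_univ_of_forall hV]
    exact Finset.card_pair huv.ne
  subst hG
  exact ⟨SimpleGraph.Iso.completeGraph (Fintype.equivFinOfCardEq hcard)⟩

lemma exists_adj_ne_of_not_iso_top_fin_two (hconn : G.Connected)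
    (hK2 : ¬ Nonempty (G ≃g (⊤ : SimpleGraph (Fin 2)))) {u v : V} (huv : G.Adj u v) :
    ∃ w, (G.Adj u w ∧ w ≠ v) ∨ (G.Adj v w ∧ w ≠ u) := by
  by_contra! hnone
  refine hK2 (nonempty_iso_top_fin_two huv fun x => ?_)
  refine (hconn u x).mem_of_adj_closed (s := ({u, v} : Set V)) ?_ (Set.mem_insert u _)
  rintro a b hab (rfl | rfl)
  · exact Or.inr ((hnone b).1 hab)
  · exact Or.inl ((hnone b).2 hab)

variable [Fintype V]

lemma W2.exists_maximum_disjoint_superset (h : W2 G) {A B : Finset V} (hA : IndepSet G A)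
    (hB : IndepSet G B) (hAB : Disjoint A B) :
    ∃ S, IndepSet G S ∧ S.card = alpha G ∧ Disjoint A S ∧ B ⊆ S := by
  unfold W2 W2On at h
  obtain ⟨S₁, -, S₂, -, -, hS₂, -, hcard, hdisj, hAS₁, hBS₂⟩ :=
    h A (Finset.subset_univ _) B (Finset.subset_univ _) hA hB hAB
  exact ⟨S₂, hS₂, hcard, hdisj.mono_left hAS₁, hBS₂⟩

lemma W2.exists_maximum_avoiding_of_not_adj (h : W2 G) {u v : V} (huv : ¬ G.Adj u v) :
    ∃ S, IndepSet G S ∧ S.card = alpha G ∧ u ∉ S ∧ v ∉ S := by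
  classical
  obtain ⟨S, hS, hcard, hdisj, -⟩ :=
    h.exists_maximum_disjoint_superset (IndepSet.pair huv) IndepSet.empty
      (Finset.disjoint_empty_right _)
  exact ⟨S, hS, hcard, Finset.disjoint_left.1 hdisj (by simp),
    Finset.disjoint_left.1 hdisj (by simp)⟩

lemma W2.exists_maximum_avoiding_of_adj (h : W2 G) {u v w : V} (huw : G.Adj u w)
    (hwv : w ≠ v) : ∃ S, IndepSet G S ∧ S.card = alpha G ∧ u ∉ S ∧ v ∉ S := by
  obtain ⟨S, hS, hcard, hdisj, hwS⟩ :=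
    h.exists_maximum_disjoint_superset (IndepSet.singleton v) (IndepSet.singleton w)
      (Finset.disjoint_singleton.2 hwv.symm)
  have hw : w ∈ S := hwS (Finset.mem_singleton_self w)
  exact ⟨S, hS, hcard, fun hu => hS u hu w hw huw,
    Finset.disjoint_singleton_left.1 hdisj⟩

end

/-- In a connected W₂ graph other than K₂, every pair of vertices is avoided by some
maximum independent set. -/
theorem stmt6 {V : Type*} [Fintype V] (G : SimpleGraph V)
    (hconn : G.Connected) (hK2 : ¬ Nonempty (G ≃g (⊤ : SimpleGraph (Fin 2))))
    (h : W2 G) :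
    ∀ u v : V, ∃ S : Finset V, IndepSet G S ∧ S.card = alpha G ∧ u ∉ S ∧ v ∉ S := by
  intro u v
  by_cases huv : G.Adj u v
  · obtain ⟨w, ⟨huw, hwv⟩ | ⟨hvw, hwu⟩⟩ := exists_adj_ne_of_not_iso_top_fin_two hconn hK2 huv
    · exact h.exists_maximum_avoiding_of_adj huw hwv
    · obtain ⟨S, hS, hcard, hv, hu⟩ := h.exists_maximum_avoiding_of_adj hvw hwu
      exact ⟨S, hS, hcard, hu, hv⟩
  · exact h.exists_maximum_avoiding_of_not_adj huv
end

section
/- Let G be a connected graph on n ≥ 2 vertices, H a graph with at least two vertices, and v ∈ V(H) a vertex not contained in all maximum independent sets of H. Then α(G(H,v)) = n·α(H), where G(H,v) is the graph obtained by identifying each vertex of G with the vertex v of its own copy of H. -/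
/-!
Every edge of `G(H,v)` either lies inside one copy of `H` or joins two copies of `v`. Hence an
independent set meets each copy of `H` in an independent set of `H`, giving `α ≤ n·α(H)`, while a
maximum independent set of `H` avoiding `v`, taken in every copy, is independent of size `n·α(H)`.
-/

open Finset

/-- The concatenation G(H,v): one copy of H per vertex u of G, with u identified with the
vertex v of its copy (modeled as vertex type V(G) × V(H), vertex (u, v) playing u). -/
def Concat {VG VH : Type*} (G : SimpleGraph VG) (H : SimpleGraph VH) (v : VH) :
    SimpleGraph (VG × VH) :=
  SimpleGraph.fromRel (fun a b =>
    (a.1 = b.1 ∧ H.Adj a.2 b.2) ∨ (a.2 = v ∧ b.2 = v ∧ G.Adj a.1 b.1))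

section Independence

variable {V : Type*} [Fintype V] {G : SimpleGraph V}

lemma card_le_alpha {A : Finset V} (hA : IndepSet G A) : #A ≤ alpha G := by
  classical
  exact le_sup (f := card) (mem_filter.2 ⟨mem_powerset.2 (subset_univ A), hA⟩)

lemma alpha_le {m : ℕ} (h : ∀ A : Finset V, IndepSet G A → #A ≤ m) : alpha G ≤ m := by
  classical
  exact Finset.sup_le fun A hA => h A (mem_filter.1 hA).2

end Independence

namespace Concat

variable {VG VH : Type*} {G : SimpleGraph VG} {H : SimpleGraph VH} {v : VH}

lemma adj_mk_mk {u : VG} {a b : VH} (h : H.Adj a b) : (Concat G H v).Adj (u, a) (u, b) :=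
  (SimpleGraph.fromRel_adj _ _ _).2
    ⟨fun hab => h.ne (Prod.ext_iff.1 hab).2, Or.inl (Or.inl ⟨rfl, h⟩)⟩

lemma adj_snd_or_eq {x y : VG × VH} (h : (Concat G H v).Adj x y) : H.Adj x.2 y.2 ∨ x.2 = v := by
  obtain ⟨-, (⟨-, hxy⟩ | ⟨hx, -⟩) | (⟨-, hyx⟩ | ⟨-, hx, -⟩)⟩ := (SimpleGraph.fromRel_adj _ _ _).1 h
  exacts [Or.inl hxy, Or.inr hx, Or.inl hyx.symm, Or.inr hx]

lemma indepSet_fiber [Fintype VH] [DecidableEq VG] [DecidableEq VH] {A : Finset (VG × VH)}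
    (hA : IndepSet (Concat G H v) A) (u : VG) : IndepSet H {b | (u, b) ∈ A} := by
  intro a ha b hb hab
  exact hA _ (mem_filter.1 ha).2 _ (mem_filter.1 hb).2 (adj_mk_mk hab)

lemma indepSet_product {S : Finset VH} (hS : IndepSet H S) (hvS : v ∉ S) (s : Finset VG) :
    IndepSet (Concat G H v) (s ×ˢ S) := by
  intro x hx y hy hxy
  rcases adj_snd_or_eq hxy with hH | hxv
  · exact hS _ (mem_product.1 hx).2 _ (mem_product.1 hy).2 hH
  · exact hvS (hxv ▸ (mem_product.1 hx).2)

lemma card_le_card_mul_alpha [Fintype VG] [Fintype VH] {A : Finset (VG × VH)}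
    (hA : IndepSet (Concat G H v) A) : #A ≤ Fintype.card VG * alpha H := by
  classical
  have hfiber (u : VG) : #{x ∈ A | x.1 = u} ≤ alpha H := by
    refine (card_le_card_of_injOn Prod.snd ?_ ?_).trans (card_le_alpha (indepSet_fiber hA u))
    · rintro ⟨w, b⟩ hx
      obtain ⟨hxA, rfl⟩ := mem_filter.1 hx
      exact mem_filter.2 ⟨mem_univ b, hxA⟩
    · intro x hx y hy hxy
      exact Prod.ext ((mem_filter.1 hx).2.trans (mem_filter.1 hy).2.symm) hxy
  simpa [mul_comm] using card_le_mul_card_image_of_maps_to (fun x _ => mem_univ x.1) _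
    fun u _ => hfiber u

end Concat

theorem stmt18_general {VG VH : Type*} [Fintype VG] [Fintype VH]
    (G : SimpleGraph VG) (H : SimpleGraph VH) (v : VH)
    (hv : ∃ S : Finset VH, IndepSet H S ∧ S.card = alpha H ∧ v ∉ S) :
    alpha (Concat G H v) = Fintype.card VG * alpha H := by
  obtain ⟨S, hS, hScard, hvS⟩ := hv
  refine le_antisymm (alpha_le fun A hA => Concat.card_le_card_mul_alpha hA) ?_
  have := card_le_alpha (Concat.indepSet_product (G := G) hS hvS univ)
  rwa [card_product, card_univ, hScard] at this

/-- If G is connected on n ≥ 2 vertices, H has ≥ 2 vertices and some maximum independent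
set of H avoids v, then α(G(H,v)) = n · α(H). -/
theorem stmt18 {VG VH : Type*} [Fintype VG] [Fintype VH]
    (G : SimpleGraph VG) (H : SimpleGraph VH) (v : VH)
    (hG : G.Connected) (hn : 2 ≤ Fintype.card VG) (hH : 2 ≤ Fintype.card VH)
    (hv : ∃ S : Finset VH, IndepSet H S ∧ S.card = alpha H ∧ v ∉ S) :
    alpha (Concat G H v) = Fintype.card VG * alpha H :=
  stmt18_general G H v hv
end
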